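/- Suppose m ≥ 2 and 5 ≤ g ≤ 2m+1 (g odd). Then for every integer weight vector (ρ_0,…,ρ_{g−1}) with ρ_0+⋯+ρ_{g−1} = 0, there exists a monomial basis of U_m of nonpositive ρ-weight. (The 'if' direction of Theorem 6.1: the m-th Hilbert point of the canonically embedded rosary of odd genus g ≥ 5 is semistable when g ≤ 2m+1.) -/

import Mathlib

/-!
Evaluated slot by slot, a degree-`m` monomial in `ω_0,…,ω_{g-2}, η` is `0`, the constant
`u^{-m}` (for `η^m`), `u^{-d} e_i` with `2 ≤ d ≤ 2m-2`, or `u^{-k} e_i + u^{k-2m} e_{i+1}`.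
Hence `U_m` is spanned by the `(g-1)(2m-1)` vectors `u^{-d} e_i` (`2 ≤ d ≤ 2m-2`) and
`u^{-d} e_i + u^{d-2m} e_{i+1}` (`d = 0, 1`), which are independent by their Laurent
coefficients; so every family of that many degree-`m` monomials spanning them is a
monomial basis.

Because the weights of the `ω_i` add up to `-ρ(η)`, summing the weight of
`ω_{i-1}^a ω_i^b η^k` over all rotations `i` gives `ρ(η)(gk - m)`: after averaging over
rotations, only the sign of `ρ(η)` and the number of `η`'s in the basis matter. If
`ρ(η) ≥ 0`, the basis with as few `η`'s as possible has weight
`ρ(η)(g(m-1) - m(2m-1)) ≤ 0`, which is where `g ≤ 2m+1` enters. If `ρ(η) < 0`, the basis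
using `ω_i^{m-d} η^d` for `d < m` and one copy of `η^m` has nonpositive weight on average over
the position of `η^m`, so some position works.
-/

noncomputable section

/-- The product ring `P = ∏_{i ∈ ℤ/(g-1)} ℂ(u)`. -/
abbrev Pro (g : ℕ) : Type := ZMod (g - 1) → RatFunc ℂ

/-- `ω_i := e_i + u^(-2)·e_(i+1)`. -/
def omegaR (g : ℕ) (i : ZMod (g - 1)) : Pro g :=
  Pi.single i 1 + Pi.single (i + 1) (RatFunc.X ^ (-2 : ℤ))

/-- `η := Σ_i u^(-1)·e_i`, i.e. the constant tuple `u^(-1)`. -/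
def etaR (g : ℕ) : Pro g := fun _ => RatFunc.X ^ (-1 : ℤ)

/-- Index type for the `g` canonical variables `ω₀,…,ω_{g-2}, η`. -/
abbrev CIdx (g : ℕ) : Type := ZMod (g - 1) ⊕ Unit

/-- The canonical variables. -/
def varC (g : ℕ) : CIdx g → Pro g :=
  Sum.elim (omegaR g) (fun _ => etaR g)

/-- `U_m`: the `ℂ`-span of all degree-`m` monomials in `ω₀,…,ω_{g-2}, η`. -/
def UC (g m : ℕ) : Submodule ℂ (Pro g) :=
  Submodule.span ℂ
    {p : Pro g | ∃ σ : Multiset (CIdx g), Multiset.card σ = m ∧ p = (σ.map (varC g)).prod}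

/-- Degree-`m` canonical monomials, as multisets of `m` variable indices. -/
abbrev CMon (g m : ℕ) := Sym (CIdx g) m

/-- A finite set of degree-`m` canonical monomials is a monomial basis of `U_m` if its
images in `P` are linearly independent over `ℂ` and span `U_m`. -/
def IsMonBasisC (g m : ℕ) (S : Finset (CMon g m)) : Prop :=
  LinearIndependent ℂ (fun s : S => (((s : CMon g m)).1.map (varC g)).prod) ∧
  Submodule.span ℂ ((fun s : CMon g m => (s.1.map (varC g)).prod) '' S) = UC g m

theorem LinearIndependent.of_span_range_eq {K M ι : Type*} [Field K] [AddCommGroup M]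
    [Module K M] [Fintype ι] {v w : ι → M} (hw : LinearIndependent K w)
    (h : Submodule.span K (Set.range v) = Submodule.span K (Set.range w)) :
    LinearIndependent K v := by
  rw [linearIndependent_iff_card_eq_finrank_span, Set.finrank, h, finrank_span_eq_card hw]

theorem RatFunc.coe_smul {F : Type*} [Field F] (c : F) (f : RatFunc F) :
    ((c • f : RatFunc F) : LaurentSeries F) = c • (f : LaurentSeries F) := by
  rw [Algebra.smul_def, map_mul, ← HahnSeries.C_mul_eq_smul]
  congr 1
  rw [IsScalarTower.algebraMap_apply F (Polynomial F) (RatFunc F) c,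
    ← IsScalarTower.algebraMap_apply]
  simp

theorem Finset.sum_range_mod_two (n : ℕ) : ∑ d ∈ Finset.range (2 * n + 1), d % 2 = n := by
  induction n with
  | zero => simp
  | succ n ih =>
    rw [show 2 * (n + 1) + 1 = 2 * n + 1 + 1 + 1 by ring, Finset.sum_range_succ,
      Finset.sum_range_succ, ih]
    omega

theorem Finset.sum_range_min (n : ℕ) :
    ∑ d ∈ Finset.range (2 * n + 1), min d (2 * n - d) = n ^ 2 := by
  induction n with
  | zero => simp
  | succ n ih =>
    have hshift : ∀ d ∈ Finset.range (2 * n + 1),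
        min (d + 1) (2 * (n + 1) - (d + 1)) = min d (2 * n - d) + 1 := by
      intro d hd
      rw [Finset.mem_range] at hd
      omega
    rw [show 2 * (n + 1) + 1 = 2 * n + 1 + 1 + 1 by ring, Finset.sum_range_succ,
      Finset.sum_range_succ', Finset.sum_congr rfl hshift, Finset.sum_add_distrib, ih,
      Finset.sum_const, Finset.card_range, show 2 * (n + 1) - (2 * n + 2) = 0 by omega]
    simp
    ring

namespace Rosary

variable {g m : ℕ}

variable (g) in
def localMon (i : ZMod (g - 1)) (a b k : ℕ) : Multiset (CIdx g) :=
  Multiset.replicate a (Sum.inl (i - 1)) + Multiset.replicate b (Sum.inl i) +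
    Multiset.replicate k (Sum.inr ())

abbrev evalMon (σ : Multiset (CIdx g)) : Pro g := (σ.map (varC g)).prod

variable (g) in
def slotPow (i : ZMod (g - 1)) (d : ℕ) : Pro g := Pi.single i (RatFunc.X⁻¹ ^ d)

lemma card_localMon (i : ZMod (g - 1)) (a b k : ℕ) :
    Multiset.card (localMon g i a b k) = a + b + k := by
  simp [localMon]

lemma omegaR_apply (i j : ZMod (g - 1)) :
    omegaR g i j = (if j = i then 1 else 0) + if j = i + 1 then RatFunc.X⁻¹ ^ 2 else 0 := by
  simp [omegaR, Pi.single_apply, zpow_neg, inv_pow]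

lemma evalMon_localMon_apply (i : ZMod (g - 1)) (a b k : ℕ) (j : ZMod (g - 1)) :
    evalMon (localMon g i a b k) j =
      ((if j = i - 1 then 1 else 0) + if j = i then RatFunc.X⁻¹ ^ 2 else 0) ^ a *
      ((if j = i then 1 else 0) + if j = i + 1 then RatFunc.X⁻¹ ^ 2 else 0) ^ b *
      RatFunc.X⁻¹ ^ k := by
  simp only [evalMon, localMon, Multiset.map_add, Multiset.map_replicate, Multiset.prod_add,
    Multiset.prod_replicate, Pi.mul_apply, Pi.pow_apply, varC, Sum.elim_inl, Sum.elim_inr,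
    etaR, omegaR_apply, sub_add_cancel, zpow_neg_one]

lemma evalMon_localMon_zero_zero [NeZero (g - 1)] (i : ZMod (g - 1)) (k : ℕ) :
    evalMon (localMon g i 0 0 k) = ∑ j, slotPow g j k := by
  funext j
  simp [evalMon_localMon_apply, slotPow, Finset.sum_apply, Pi.single_apply]

def coeffAt (j : ZMod (g - 1)) (d : ℕ) : Pro g →ₗ[ℂ] ℂ where
  toFun p := ((p j : RatFunc ℂ) : LaurentSeries ℂ).coeff (-d)
  map_add' p q := by simp
  map_smul' c p := by
    rw [Pi.smul_apply, RatFunc.coe_smul, HahnSeries.coeff_smul, RingHom.id_apply,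
      smul_eq_mul]

lemma coeffAt_slotPow (i j : ZMod (g - 1)) (d e : ℕ) :
    coeffAt j d (slotPow g i e) = if j = i ∧ d = e then 1 else 0 := by
  by_cases hij : j = i
  · subst hij
    simp [coeffAt, slotPow, HahnSeries.inv_single, HahnSeries.single_pow, HahnSeries.coeff_single]
  · simp [coeffAt, slotPow, hij]

variable (g m) in
abbrev BasisIdx := ZMod (g - 1) × Fin (2 * m - 1)

variable (g m) in
/-- A basis of `U_m`; for `d = 0, 1` these are the values of `ω_i^m` and `ω_i^{m-1} η`. -/
def refVec (x : BasisIdx g m) : Pro g :=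
  slotPow g x.1 x.2 + if (x.2 : ℕ) < 2 then slotPow g (x.1 + 1) (2 * m - x.2) else 0

lemma linearIndependent_refVec [NeZero (g - 1)] : LinearIndependent ℂ (refVec g m) := by
  let Φ : Pro g →ₗ[ℂ] BasisIdx g m → ℂ := LinearMap.pi fun x => coeffAt x.1 x.2
  have hΦ : Φ ∘ refVec g m = Pi.basisFun ℂ (BasisIdx g m) := by
    funext y x
    have := x.2.2
    simp only [Φ, Function.comp_apply, LinearMap.pi_apply, refVec, map_add,
      apply_ite (coeffAt _ _), map_zero, coeffAt_slotPow, Pi.basisFun_apply, Pi.single_apply,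
      Prod.ext_iff, Fin.ext_iff]
    split_ifs <;> grind
  exact LinearIndependent.of_comp Φ (hΦ ▸ (Pi.basisFun ℂ _).linearIndependent)

variable (g m) in
def refSpan : Submodule ℂ (Pro g) := Submodule.span ℂ (Set.range (refVec g m))

lemma slotPow_mem_refSpan (i : ZMod (g - 1)) {d : ℕ} (hd : 2 ≤ d) (hd' : d ≤ 2 * m - 2) :
    slotPow g i d ∈ refSpan g m := by
  have h : refVec g m (i, ⟨d, by omega⟩) = slotPow g i d := by
    simp [refVec, show ¬ d < 2 by omega]
  exact h ▸ Submodule.subset_span ⟨_, rfl⟩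

lemma slotPow_add_slotPow_mem_refSpan (hm : 2 ≤ m) (i : ZMod (g - 1)) {k : ℕ} (hk : k ≤ m) :
    slotPow g i k + slotPow g (i + 1) (2 * m - k) ∈ refSpan g m := by
  by_cases hk2 : k < 2
  · have h : refVec g m (i, ⟨k, by omega⟩) =
        slotPow g i k + slotPow g (i + 1) (2 * m - k) := by
      simp [refVec, hk2]
    exact h ▸ Submodule.subset_span ⟨_, rfl⟩
  · exact add_mem (slotPow_mem_refSpan i (by omega) (by omega))
      (slotPow_mem_refSpan (i + 1) (by omega) (by omega))

lemma evalMon_eq_zero {σ : Multiset (CIdx g)}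
    (hσ : ∀ i : ZMod (g - 1), ∃ p, Sum.inl p ∈ σ ∧ p ≠ i - 1 ∧ p ≠ i) :
    evalMon σ = 0 := by
  funext j
  obtain ⟨p, hp, hp₁, hp₂⟩ := hσ j
  rw [evalMon, Pi.multiset_prod_apply, Pi.zero_apply, Multiset.map_map]
  refine Multiset.prod_eq_zero (Multiset.mem_map.2 ⟨_, hp, ?_⟩)
  have hj : j ≠ p + 1 := fun h => hp₁ (by rw [h, add_sub_cancel_right])
  simp [varC, omegaR_apply, hj, Ne.symm hp₂]

variable (g m) in
def lowMon (i : ZMod (g - 1)) (d : ℕ) : Multiset (CIdx g) :=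
  localMon g i (d / 2) (m - d / 2 - d % 2) (d % 2)

variable (g m) in
def highMon (c i : ZMod (g - 1)) (d : ℕ) : Multiset (CIdx g) :=
  if d < m ∨ (i = c ∧ d = m) then localMon g i 0 (m - d) d
  else localMon g i (d + 1 - m) 1 (2 * m - 2 - d)

lemma card_lowMon (i : ZMod (g - 1)) {d : ℕ} (hd : d < 2 * m - 1) :
    Multiset.card (lowMon g m i d) = m := by
  rw [lowMon, card_localMon]; omega

lemma card_highMon (c i : ZMod (g - 1)) {d : ℕ} (hd : d < 2 * m - 1) :
    Multiset.card (highMon g m c i d) = m := by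
  rw [highMon]; split_ifs <;> rw [card_localMon] <;> omega

lemma evalMon_highMon_self [NeZero (g - 1)] (c : ZMod (g - 1)) :
    evalMon (highMon g m c c m) = ∑ j, slotPow g j m := by
  rw [highMon, if_pos (Or.inr ⟨rfl, rfl⟩), Nat.sub_self, evalMon_localMon_zero_zero]

lemma natCast_ne_zero_of_lt {n : ℕ} (hn : n < g - 1) (hn0 : n ≠ 0) :
    (n : ZMod (g - 1)) ≠ 0 := by
  rw [Ne, ZMod.natCast_eq_zero_iff]
  exact fun h => by have := Nat.le_of_dvd (Nat.pos_of_ne_zero hn0) h; omega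

section

variable (hg : 4 ≤ g)
include hg

lemma neighbors_ne (i : ZMod (g - 1)) : i - 1 ≠ i ∧ i + 1 ≠ i ∧ i + 1 ≠ i - 1 := by
  have h1 : (1 : ZMod (g - 1)) ≠ 0 := by
    exact_mod_cast natCast_ne_zero_of_lt (by omega) one_ne_zero
  have h2 : (2 : ZMod (g - 1)) ≠ 0 := by
    exact_mod_cast natCast_ne_zero_of_lt (by omega) two_ne_zero
  exact ⟨fun h => h1 (by linear_combination -h), fun h => h1 (by linear_combination h),
    fun h => h2 (by linear_combination h)⟩

lemma evalMon_localMon_of_ne_zero (i : ZMod (g - 1)) {a b : ℕ} (k : ℕ) (ha : a ≠ 0)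
    (hb : b ≠ 0) :
    evalMon (localMon g i a b k) = slotPow g i (2 * a + k) := by
  obtain ⟨h₁, h₂, h₃⟩ := neighbors_ne hg i
  funext j
  rw [evalMon_localMon_apply, slotPow, Pi.single_apply]
  by_cases hji : j = i
  · subst hji
    simp [h₁.symm, h₂.symm, pow_mul, pow_add]
  by_cases hj1 : j = i - 1
  · subst hj1; simp [h₁, h₃.symm, hb]
  by_cases hj2 : j = i + 1
  · subst hj2; simp [h₂, h₃, ha]
  · simp [hji, hj1, hj2, ha]

lemma evalMon_localMon_zero_left (i : ZMod (g - 1)) {b : ℕ} (k : ℕ) (hb : b ≠ 0) :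
    evalMon (localMon g i 0 b k) = slotPow g i k + slotPow g (i + 1) (2 * b + k) := by
  obtain ⟨h₁, h₂, h₃⟩ := neighbors_ne hg i
  funext j
  rw [evalMon_localMon_apply, Pi.add_apply, slotPow, slotPow, Pi.single_apply, Pi.single_apply]
  by_cases hji : j = i
  · subst hji
    simp [h₂.symm]
  by_cases hj2 : j = i + 1
  · subst hj2; simp [h₂, pow_mul, pow_add]
  · simp [hji, hj2, hb]

lemma eq_localMon {σ : Multiset (CIdx g)} {i : ZMod (g - 1)}
    (hσ : ∀ p, Sum.inl p ∈ σ → p = i - 1 ∨ p = i) :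
    σ = localMon g i (σ.count (Sum.inl (i - 1))) (σ.count (Sum.inl i))
      (σ.count (Sum.inr ())) := by
  have hne := (neighbors_ne hg i).1
  ext x
  rcases x with p | ⟨⟩
  · by_cases h₁ : p = i - 1
    · rw [h₁]; simp [localMon, Multiset.count_replicate, hne.symm]
    by_cases h₂ : p = i
    · rw [h₂]; simp [localMon, Multiset.count_replicate, hne]
    rw [Multiset.count_eq_zero_of_notMem fun hp => (hσ p hp).elim h₁ h₂]
    simp [localMon, Multiset.count_replicate, Ne.symm h₁, Ne.symm h₂]
  · simp [localMon, Multiset.count_replicate]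

lemma evalMon_localMon_mem_refSpan [NeZero (g - 1)] (hm : 2 ≤ m) (i : ZMod (g - 1))
    {a b k : ℕ} (habk : a + b + k = m) : evalMon (localMon g i a b k) ∈ refSpan g m := by
  rcases Nat.eq_zero_or_pos a with rfl | ha <;> rcases Nat.eq_zero_or_pos b with rfl | hb
  · rw [evalMon_localMon_zero_zero]
    exact Submodule.sum_mem _ fun j _ => slotPow_mem_refSpan j (by omega) (by omega)
  · rw [evalMon_localMon_zero_left hg i k hb.ne', show 2 * b + k = 2 * m - k by omega]
    exact slotPow_add_slotPow_mem_refSpan hm i (by omega)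
  · have h : localMon g i a 0 k = localMon g (i - 1) 0 a k := by simp [localMon]
    rw [h, evalMon_localMon_zero_left hg _ k ha.ne', show 2 * a + k = 2 * m - k by omega]
    exact slotPow_add_slotPow_mem_refSpan hm _ (by omega)
  · rw [evalMon_localMon_of_ne_zero hg i k ha.ne' hb.ne']
    exact slotPow_mem_refSpan i (by omega) (by omega)

lemma evalMon_mem_refSpan [NeZero (g - 1)] (hm : 2 ≤ m) {σ : Multiset (CIdx g)}
    (hσ : Multiset.card σ = m) : evalMon σ ∈ refSpan g m := by
  by_cases h : ∃ i : ZMod (g - 1), ∀ p, Sum.inl p ∈ σ → p = i - 1 ∨ p = i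
  · obtain ⟨i, hi⟩ := h
    rw [eq_localMon hg hi] at hσ ⊢
    rw [card_localMon] at hσ
    exact evalMon_localMon_mem_refSpan hg hm i hσ
  · push Not at h
    rw [evalMon_eq_zero fun i => by simpa [and_assoc] using h i]
    exact zero_mem _

theorem exists_isMonBasisC [NeZero (g - 1)] (hm : 2 ≤ m) (v : BasisIdx g m → CMon g m)
    (hv : ∀ x, refVec g m x ∈ Submodule.span ℂ (Set.range fun x => evalMon (v x).1)) :
    ∃ S : Finset (CMon g m), IsMonBasisC g m S ∧
      ∀ f : CMon g m → ℤ, ∑ σ ∈ S, f σ = ∑ x, f (v x) := by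
  have hUC : UC g m ≤ refSpan g m :=
    Submodule.span_le.2 fun _ ⟨σ, hσ, h⟩ => h ▸ evalMon_mem_refSpan hg hm hσ
  have hv_UC : Submodule.span ℂ (Set.range fun x => evalMon (v x).1) ≤ UC g m :=
    Submodule.span_le.2 fun _ ⟨x, h⟩ => Submodule.subset_span ⟨(v x).1, (v x).2, h.symm⟩
  have hspan : Submodule.span ℂ (Set.range fun x => evalMon (v x).1) = refSpan g m :=
    le_antisymm (hv_UC.trans hUC) (Submodule.span_le.2 (Set.range_subset_iff.2 hv))
  have hli := linearIndependent_refVec.of_span_range_eq hspan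
  have hinj : Function.Injective v :=
    Function.Injective.of_comp (f := fun σ : CMon g m => evalMon σ.1) hli.injective
  refine ⟨Finset.univ.image v, ⟨?_, ?_⟩, fun f => Finset.sum_image fun x _ y _ h => hinj h⟩
  · let e : BasisIdx g m ≃ Finset.univ.image v :=
      (Equiv.ofInjective v hinj).trans (Equiv.subtypeEquivRight (by simp))
    exact (linearIndependent_equiv e).1 hli
  · rw [Finset.coe_image, Finset.coe_univ, Set.image_univ, ← Set.range_comp]
    exact le_antisymm hv_UC (hUC.trans (hspan ▸ le_rfl))

lemma evalMon_lowMon (hm : 2 ≤ m) (x : BasisIdx g m) :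
    evalMon (lowMon g m x.1 x.2) = refVec g m x := by
  obtain ⟨i, d, hd⟩ := x
  dsimp only
  by_cases hd2 : d < 2
  · rw [lowMon, show d / 2 = 0 by omega, evalMon_localMon_zero_left hg i _ (by omega)]
    simp [refVec, hd2, Nat.mod_eq_of_lt hd2, show 2 * (m - d) + d = 2 * m - d by omega]
  · rw [lowMon, evalMon_localMon_of_ne_zero hg i _ (by omega) (by omega), Nat.div_add_mod]
    simp [refVec, hd2]

lemma evalMon_highMon_of_lt (c i : ZMod (g - 1)) {d : ℕ} (hd : d < m) :
    evalMon (highMon g m c i d) = slotPow g i d + slotPow g (i + 1) (2 * m - d) := by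
  rw [highMon, if_pos (Or.inl hd), evalMon_localMon_zero_left hg i d (by omega),
    show 2 * (m - d) + d = 2 * m - d by omega]

lemma evalMon_highMon_of_le (c i : ZMod (g - 1)) {d : ℕ} (hmd : m ≤ d) (hd : d < 2 * m - 1)
    (hic : ¬(i = c ∧ d = m)) : evalMon (highMon g m c i d) = slotPow g i d := by
  rw [highMon, if_neg fun h => h.elim (by omega) hic,
    evalMon_localMon_of_ne_zero hg i _ (show d + 1 - m ≠ 0 by omega) one_ne_zero,
    show 2 * (d + 1 - m) + (2 * m - 2 - d) = d by omega]

lemma refVec_mem_span_highMon [NeZero (g - 1)] (hm : 2 ≤ m) (c : ZMod (g - 1))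
    (x : BasisIdx g m) :
    refVec g m x ∈
      Submodule.span ℂ (Set.range fun y : BasisIdx g m => evalMon (highMon g m c y.1 y.2)) := by
  set V := Submodule.span ℂ (Set.range fun y : BasisIdx g m => evalMon (highMon g m c y.1 y.2))
  have hV : ∀ (i : ZMod (g - 1)) (d : ℕ), d < 2 * m - 1 → evalMon (highMon g m c i d) ∈ V :=
    fun i d hd => Submodule.subset_span ⟨(i, ⟨d, hd⟩), rfl⟩
  obtain ⟨i, d, hd⟩ := x
  by_cases hd2 : d < 2
  · convert hV i d hd using 1
    rw [evalMon_highMon_of_lt hg c i (by omega)]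
    simp [refVec, hd2]
  have hx : refVec g m (i, ⟨d, hd⟩) = slotPow g i d := by simp [refVec, hd2]
  rw [hx]
  by_cases hdm : d < m
  · have h := sub_mem (hV i d hd) (hV (i + 1) (2 * m - d) (by omega))
    rwa [evalMon_highMon_of_lt hg c i hdm,
      evalMon_highMon_of_le hg c (i + 1) (by omega) (by omega) (fun h => by omega),
      add_sub_cancel_right] at h
  by_cases hic : i = c ∧ d = m
  · obtain ⟨rfl, rfl⟩ := hic
    have h := sub_mem (hV i d hd) (Submodule.sum_mem V fun j (hj : j ∈ Finset.univ.erase i) =>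
      hV j d hd)
    rwa [evalMon_highMon_self, ← Finset.add_sum_erase _ _ (Finset.mem_univ i),
      Finset.sum_congr rfl fun j hj => evalMon_highMon_of_le hg i j le_rfl hd
        fun h => Finset.ne_of_mem_erase hj h.1, add_sub_cancel_right] at h
  · exact evalMon_highMon_of_le hg c i (by omega) hd hic ▸ hV i d hd

end

lemma weight_localMon (ρ : CIdx g → ℤ) (i : ZMod (g - 1)) (a b k : ℕ) :
    ((localMon g i a b k).map ρ).sum =
      a * ρ (Sum.inl (i - 1)) + b * ρ (Sum.inl i) + k * ρ (Sum.inr ()) := by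
  simp [localMon]

section

variable [NeZero (g - 1)] {ρ : CIdx g → ℤ} (hρ : ∑ v, ρ v = 0)

lemma sum_basisIdx_eq_sum_range (f : ZMod (g - 1) → ℕ → ℤ) :
    ∑ x : BasisIdx g m, f x.1 x.2 = ∑ d ∈ Finset.range (2 * m - 1), ∑ i, f i d := by
  rw [Fintype.sum_prod_type_right, Fin.sum_univ_eq_sum_range (fun d => ∑ i, f i d)]

lemma natCast_card_zmod : ((Fintype.card (ZMod (g - 1)) : ℕ) : ℤ) = g - 1 := by
  have := NeZero.ne (g - 1)
  rw [ZMod.card]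
  omega

lemma sum_comp_sub_one (f : ZMod (g - 1) → ℤ) : ∑ i, f (i - 1) = ∑ i, f i :=
  (Equiv.subRight 1).sum_comp f

include hρ

lemma sum_weight_inl : ∑ i, ρ (Sum.inl i) = -ρ (Sum.inr ()) := by
  simp only [Fintype.sum_sum_type, Finset.univ_unique, Finset.sum_singleton] at hρ
  exact eq_neg_of_add_eq_zero_left hρ

lemma sum_weight_localMon {a b k n : ℕ} (h : a + b + k = n) :
    ∑ i, ((localMon g i a b k).map ρ).sum = ρ (Sum.inr ()) * (g * k - n) := by
  simp only [weight_localMon, Finset.sum_add_distrib, ← Finset.mul_sum,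
    sum_comp_sub_one fun i => ρ (Sum.inl i), sum_weight_inl hρ, Finset.sum_const,
    Finset.card_univ, nsmul_eq_mul, natCast_card_zmod]
  rw [← h]
  push_cast
  ring

lemma sum_weight_lowMon (hm : 1 ≤ m) :
    ∑ x : BasisIdx g m, ((lowMon g m x.1 x.2).map ρ).sum =
      ρ (Sum.inr ()) * (g * (m - 1) - m * (2 * m - 1)) := by
  have hk : ∑ d ∈ Finset.range (2 * m - 1), ((d % 2 : ℕ) : ℤ) = m - 1 := by
    rw [show 2 * m - 1 = 2 * (m - 1) + 1 by omega, ← Nat.cast_sum, Finset.sum_range_mod_two]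
    omega
  rw [sum_basisIdx_eq_sum_range fun i d => ((lowMon g m i d).map ρ).sum]
  simp only [lowMon]
  rw [Finset.sum_congr rfl fun d hd => sum_weight_localMon hρ
    (show d / 2 + (m - d / 2 - d % 2) + d % 2 = m by rw [Finset.mem_range] at hd; omega)]
  rw [← Finset.mul_sum, Finset.sum_sub_distrib, ← Finset.mul_sum, hk, Finset.sum_const,
    Finset.card_range, nsmul_eq_mul]
  push_cast [show 1 ≤ 2 * m by omega]
  ring

lemma sum_weight_highMon_of_ne (c : ZMod (g - 1)) {d : ℕ} (hd : d < 2 * m - 1) (hdm : d ≠ m) :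
    ∑ i, ((highMon g m c i d).map ρ).sum =
      ρ (Sum.inr ()) * (g * (min d (2 * m - 2 - d) : ℕ) - m) := by
  by_cases hlt : d < m
  · simp only [highMon, if_pos (Or.inl hlt)]
    rw [sum_weight_localMon hρ (show 0 + (m - d) + d = m by omega),
      show min d (2 * m - 2 - d) = d by omega]
  · simp only [highMon, hlt, hdm, and_false, or_self, if_false]
    rw [sum_weight_localMon hρ (show d + 1 - m + 1 + (2 * m - 2 - d) = m by omega),
      show min d (2 * m - 2 - d) = 2 * m - 2 - d by omega]

lemma sum_weight_highMon_self (hm : 2 ≤ m) (c : ZMod (g - 1)) :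
    ∑ i, ((highMon g m c i m).map ρ).sum =
      ρ (Sum.inr ()) * (g * (m - 2 : ℕ) - m) +
        (2 * ρ (Sum.inr ()) - ρ (Sum.inl (c - 1)) - ρ (Sum.inl c)) := by
  have hswap : ∀ i, ((highMon g m c i m).map ρ).sum = ((localMon g i 1 1 (m - 2)).map ρ).sum +
      if i = c then ((localMon g c 0 0 m).map ρ).sum - ((localMon g c 1 1 (m - 2)).map ρ).sum
      else 0 := by
    intro i
    by_cases hic : i = c
    · subst hic; simp [highMon]
    · simp [highMon, hic, show 2 * m - 2 - m = m - 2 by omega]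
  rw [Finset.sum_congr rfl fun i _ => hswap i, Finset.sum_add_distrib,
    sum_weight_localMon hρ (show 1 + 1 + (m - 2) = m by omega), Finset.sum_ite_eq',
    if_pos (Finset.mem_univ c), weight_localMon, weight_localMon]
  push_cast [hm]
  ring

lemma sum_weight_highMon (hm : 2 ≤ m) (c : ZMod (g - 1)) :
    ∑ x : BasisIdx g m, ((highMon g m c x.1 x.2).map ρ).sum =
      ρ (Sum.inr ()) * (g * (m - 1) ^ 2 - m * (2 * m - 1)) +
        (2 * ρ (Sum.inr ()) - ρ (Sum.inl (c - 1)) - ρ (Sum.inl c)) := by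
  have hcol : ∀ d ∈ Finset.range (2 * m - 1), ∑ i, ((highMon g m c i d).map ρ).sum =
      ρ (Sum.inr ()) * (g * (min d (2 * m - 2 - d) : ℕ) - m) +
        if d = m then 2 * ρ (Sum.inr ()) - ρ (Sum.inl (c - 1)) - ρ (Sum.inl c) else 0 := by
    intro d hd
    rw [Finset.mem_range] at hd
    by_cases hdm : d = m
    · subst hdm
      rw [sum_weight_highMon_self hρ hm, if_pos rfl, show min d (2 * d - 2 - d) = d - 2 by omega]
    · rw [sum_weight_highMon_of_ne hρ c hd hdm, if_neg hdm, add_zero]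
  have hmin : ∑ d ∈ Finset.range (2 * m - 1), ((min d (2 * m - 2 - d) : ℕ) : ℤ) =
      (m - 1) ^ 2 := by
    rw [show 2 * m - 1 = 2 * (m - 1) + 1 by omega, show 2 * m - 2 = 2 * (m - 1) by omega,
      ← Nat.cast_sum, Finset.sum_range_min]
    push_cast [show 1 ≤ m by omega]
    ring
  rw [sum_basisIdx_eq_sum_range fun i d => ((highMon g m c i d).map ρ).sum,
    Finset.sum_congr rfl hcol, Finset.sum_add_distrib, Finset.sum_ite_eq',
    if_pos (Finset.mem_range.2 (by omega)), ← Finset.mul_sum, Finset.sum_sub_distrib,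
    ← Finset.mul_sum, hmin, Finset.sum_const, Finset.card_range, nsmul_eq_mul]
  push_cast [show 1 ≤ 2 * m by omega]
  ring

lemma exists_sum_weight_highMon_nonpos (hg : 4 ≤ g) (hm : 2 ≤ m) (hs : ρ (Sum.inr ()) < 0) :
    ∃ c : ZMod (g - 1), ∑ x : BasisIdx g m, ((highMon g m c x.1 x.2).map ρ).sum ≤ 0 := by
  have hg' : (4 : ℤ) ≤ g := by exact_mod_cast hg
  have hm' : (2 : ℤ) ≤ m := by exact_mod_cast hm
  have hB : 0 ≤ ((g : ℤ) - 1) * (g * (m - 1) ^ 2 - m * (2 * m - 1)) + 2 * g := by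
    nlinarith [mul_nonneg (sub_nonneg.2 hg') (sub_nonneg.2 hm'),
      mul_nonneg (mul_nonneg (sub_nonneg.2 hg') (sub_nonneg.2 hg')) (sub_nonneg.2 hm')]
  have havg : ∑ c : ZMod (g - 1), ∑ x : BasisIdx g m, ((highMon g m c x.1 x.2).map ρ).sum =
      ρ (Sum.inr ()) * (((g : ℤ) - 1) * (g * (m - 1) ^ 2 - m * (2 * m - 1)) + 2 * g) := by
    simp only [sum_weight_highMon hρ hm, Finset.sum_add_distrib, Finset.sum_sub_distrib,
      sum_comp_sub_one fun i => ρ (Sum.inl i), sum_weight_inl hρ, Finset.sum_const,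
      Finset.card_univ, nsmul_eq_mul, natCast_card_zmod]
    ring
  obtain ⟨c, -, hc⟩ := Finset.exists_le_of_sum_le (g := 0) Finset.univ_nonempty
    (havg.trans_le (by simpa using mul_nonpos_of_nonpos_of_nonneg hs.le hB))
  exact ⟨c, hc⟩

theorem exists_isMonBasisC_weight_nonpos_of_nonneg (hg : 4 ≤ g) (hm : 2 ≤ m)
    (hgm : g ≤ 2 * m + 1) (hs : 0 ≤ ρ (Sum.inr ())) :
    ∃ S : Finset (CMon g m), IsMonBasisC g m S ∧ ∑ σ ∈ S, (σ.1.map ρ).sum ≤ 0 := by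
  obtain ⟨S, hS, hsum⟩ := exists_isMonBasisC hg hm
    (fun x => ⟨lowMon g m x.1 x.2, card_lowMon x.1 x.2.2⟩)
    fun x => evalMon_lowMon hg hm x ▸ Submodule.subset_span ⟨x, rfl⟩
  refine ⟨S, hS, ?_⟩
  rw [hsum, sum_weight_lowMon hρ (by omega)]
  have hgm' : (g : ℤ) ≤ 2 * m + 1 := by exact_mod_cast hgm
  have hm' : (1 : ℤ) ≤ m := by exact_mod_cast (by omega : 1 ≤ m)
  nlinarith [mul_le_mul_of_nonneg_right hgm' (sub_nonneg.2 hm')]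

theorem exists_isMonBasisC_weight_nonpos_of_neg (hg : 4 ≤ g) (hm : 2 ≤ m)
    (hs : ρ (Sum.inr ()) < 0) :
    ∃ S : Finset (CMon g m), IsMonBasisC g m S ∧ ∑ σ ∈ S, (σ.1.map ρ).sum ≤ 0 := by
  obtain ⟨c, hc⟩ := exists_sum_weight_highMon_nonpos hρ hg hm hs
  obtain ⟨S, hS, hsum⟩ := exists_isMonBasisC hg hm
    (fun x => ⟨highMon g m c x.1 x.2, card_highMon c x.1 x.2.2⟩)
    (refVec_mem_span_highMon hg hm c)
  exact ⟨S, hS, (hsum _).trans_le hc⟩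

end

end Rosary

theorem rosary_canonical_semistable_general (g m : ℕ) (hg : 5 ≤ g)
    (hm : 2 ≤ m) (hgm : g ≤ 2 * m + 1) [NeZero (g - 1)]
    (ρ : CIdx g → ℤ) (hρ : (∑ i : CIdx g, ρ i) = 0) :
    ∃ S : Finset (CMon g m), IsMonBasisC g m S ∧
      (∑ σ ∈ S, (σ.1.map ρ).sum) ≤ 0 := by
  rcases le_or_gt 0 (ρ (Sum.inr ())) with hs | hs
  · exact Rosary.exists_isMonBasisC_weight_nonpos_of_nonneg hρ (by omega) hm hgm hs
  · exact Rosary.exists_isMonBasisC_weight_nonpos_of_neg hρ (by omega) hm hs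

/-- The 'if' direction of Theorem 6.1.  (The instance `NeZero (g-1)`, which follows
from `5 ≤ g`, makes `ℤ/(g-1)` a fintype so that the total weight sum makes sense.) -/
theorem rosary_canonical_semistable (g m : ℕ) (hodd : Odd g) (hg : 5 ≤ g)
    (hm : 2 ≤ m) (hgm : g ≤ 2 * m + 1) [NeZero (g - 1)]
    (ρ : CIdx g → ℤ) (hρ : (∑ i : CIdx g, ρ i) = 0) :
    ∃ S : Finset (CMon g m), IsMonBasisC g m S ∧
      (∑ σ ∈ S, (σ.1.map ρ).sum) ≤ 0 :=
  rosary_canonical_semistable_general g m hg hm hgm ρ hρ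

end
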